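/- Interior maximum of the ant velocity for strong interaction: let y > 2 and A > 0, and define ν(ρ) = A·(1−ρ)·z(1−ρ)/ρ for 0 < ρ < 1, where z(u) = 1 − (1 − √(1 − 4·u·(1−u)·(1 − 1/y))) / (2·(1−u)·(1 − 1/y)). Then ρ_m = (2y − 4)/(3y − 4) lies in (0, 1), ν(ρ_m) = A·y/(4·(y−1)), and ν(ρ) ≤ A·y/(4·(y−1)) for all ρ ∈ (0, 1), with equality if and only if ρ = ρ_m. (With A = q⋆·(f⋆+Q⋆)/(f⋆+q⋆) this maximum equals (f⋆ + Q⋆)·q⋆·y / (4·(f⋆ + q⋆)·(y − 1)).) -/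

import Mathlib

/-- The fugacity at particle density `u` and interaction strength `y`:
`z(u) = 1 − (1 − √(1 − 4u(1−u)(1−1/y)))/(2(1−u)(1−1/y))`. -/
noncomputable def zfun (y u : ℝ) : ℝ :=
  1 - (1 - Real.sqrt (1 - 4 * u * (1 - u) * (1 - 1 / y))) / (2 * (1 - u) * (1 - 1 / y))

/-- The stationary ant velocity at ant density `ρ`:
`ν(ρ) = A·(1−ρ)·z(1−ρ)/ρ`. -/
noncomputable def antVel (A y ρ : ℝ) : ℝ :=
  A * (1 - ρ) * zfun y (1 - ρ) / ρ

/-- interior maximum of the ant velocity for strong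
interaction `y > 2`: the velocity attains its maximum `A·y/(4(y−1))` exactly at
`ρ_m = (2y−4)/(3y−4) ∈ (0,1)`. -/
theorem antVelocity_interior_maximum (y A : ℝ) (hy : 2 < y) (hA : 0 < A) :
    0 < (2 * y - 4) / (3 * y - 4)
    ∧ (2 * y - 4) / (3 * y - 4) < 1
    ∧ antVel A y ((2 * y - 4) / (3 * y - 4)) = A * y / (4 * (y - 1))
    ∧ (∀ ρ : ℝ, 0 < ρ → ρ < 1 →
        antVel A y ρ ≤ A * y / (4 * (y - 1))
        ∧ (antVel A y ρ = A * y / (4 * (y - 1)) ↔ ρ = (2 * y - 4) / (3 * y - 4)))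
    ∧ ∀ qs Qs fs : ℝ, 0 < qs → 0 < Qs → 0 < fs →
        A = qs * (fs + Qs) / (fs + qs) →
        A * y / (4 * (y - 1)) = (fs + Qs) * qs * y / (4 * (fs + qs) * (y - 1)) := by
  have hy0 : (0:ℝ) < y := by linarith
  have hy1 : (0:ℝ) < y - 1 := by linarith
  have h34 : (0:ℝ) < 3 * y - 4 := by linarith
  have h24 : (0:ℝ) < 2 * y - 4 := by linarith
  have hyne : y ≠ 0 := hy0.ne'
  have hy1ne : y - 1 ≠ 0 := hy1.ne'
  have hb : 0 < 1 - 1 / y := by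
    have : 1 / y < 1 := by rw [div_lt_one hy0]; linarith
    linarith
  -- key identity
  have key : ∀ ρ : ℝ, 0 < ρ → ρ < 1 →
      antVel A y ρ = A * y / (4 * (y - 1)) -
        A * y * (Real.sqrt (1 - 4 * (1 - ρ) * (1 - (1 - ρ)) * (1 - 1 / y)) - (1 - ρ))^2
          / (4 * ρ^2 * (y - 1)) := by
    intro ρ hρ0 hρ1
    set s := Real.sqrt (1 - 4 * (1 - ρ) * (1 - (1 - ρ)) * (1 - 1 / y)) with hs
    have harg : 0 ≤ 1 - 4 * (1 - ρ) * (1 - (1 - ρ)) * (1 - 1 / y) := by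
      have h1 : (0:ℝ) < 1 / y := by positivity
      nlinarith [mul_nonneg hb.le (sq_nonneg (2*ρ - 1))]
    have hs2 : s ^ 2 = 1 - 4 * (1 - ρ) * (1 - (1 - ρ)) * (1 - 1 / y) := Real.sq_sqrt harg
    have hρ : ρ ≠ 0 := hρ0.ne'
    have hbne : 1 - 1 / y ≠ 0 := hb.ne'
    have hs2' : y * s ^ 2 = y - 4 * (1 - ρ) * ρ * (y - 1) := by
      field_simp at hs2; linarith [hs2]
    unfold antVel zfun
    rw [← hs]
    have hρ' : 1 - (1 - ρ) ≠ 0 := by simpa using hρ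
    field_simp
    linear_combination (2*ρ) * hs2'
  -- the critical point is in (0,1)
  have hρm0 : 0 < (2 * y - 4) / (3 * y - 4) := div_pos h24 h34
  have hρm1 : (2 * y - 4) / (3 * y - 4) < 1 := by
    rw [div_lt_one h34]; linarith
  -- main fact for each ρ
  have main : ∀ ρ : ℝ, 0 < ρ → ρ < 1 →
      antVel A y ρ ≤ A * y / (4 * (y - 1))
      ∧ (antVel A y ρ = A * y / (4 * (y - 1)) ↔ ρ = (2 * y - 4) / (3 * y - 4)) := by
    intro ρ hρ0 hρ1
    have hk := key ρ hρ0 hρ1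
    set s := Real.sqrt (1 - 4 * (1 - ρ) * (1 - (1 - ρ)) * (1 - 1 / y)) with hs
    have harg : 0 ≤ 1 - 4 * (1 - ρ) * (1 - (1 - ρ)) * (1 - 1 / y) := by
      have h1 : (0:ℝ) < 1 / y := by positivity
      nlinarith [mul_nonneg hb.le (sq_nonneg (2*ρ - 1))]
    have hs2 : s ^ 2 = 1 - 4 * (1 - ρ) * (1 - (1 - ρ)) * (1 - 1 / y) := Real.sq_sqrt harg
    have hden : 0 < 4 * ρ^2 * (y - 1) := by positivity
    have hterm : 0 ≤ A * y * (s - (1 - ρ))^2 / (4 * ρ^2 * (y - 1)) := by positivity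
    constructor
    · linarith [hk, hterm]
    · constructor
      · intro h
        have h0 : A * y * (s - (1 - ρ))^2 / (4 * ρ^2 * (y - 1)) = 0 := by linarith [hk]
        have h1 : (s - (1 - ρ))^2 = 0 := by
          by_contra hne
          have : 0 < (s - (1 - ρ))^2 := lt_of_le_of_ne (sq_nonneg _) (Ne.symm hne)
          have : 0 < A * y * (s - (1 - ρ))^2 / (4 * ρ^2 * (y - 1)) := by positivity
          linarith
        have hsu : s = 1 - ρ := by
          have := pow_eq_zero_iff (n := 2) (by norm_num) |>.mp h1
          linarith
        -- s = 1-ρ forces ρ = ρ_m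
        have hE : (1 - ρ)^2 = 1 - 4 * (1 - ρ) * (1 - (1 - ρ)) * (1 - 1 / y) := by
          rw [← hs2, hsu]
        have hE' : ρ * (ρ * (3 * y - 4) - (2 * y - 4)) = 0 := by
          field_simp at hE
          linear_combination -hE
        have hfac : ρ * (3 * y - 4) - (2 * y - 4) = 0 := by
          rcases mul_eq_zero.mp hE' with h | h
          · exact absurd h hρ0.ne'
          · exact h
        rw [eq_div_iff h34.ne']
        linarith
      · intro h
        subst h
        have hargeq : 1 - 4 * (1 - (2 * y - 4) / (3 * y - 4)) * (1 - (1 - (2 * y - 4) / (3 * y - 4))) * (1 - 1 / y)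
            = (1 - (2 * y - 4) / (3 * y - 4))^2 := by
          have h34' := h34.ne'
          have h34'' : y * 3 - 4 ≠ 0 := by linarith
          rw [sub_sub_cancel]
          field_simp
          ring
        have hsu : s = 1 - (2 * y - 4) / (3 * y - 4) := by
          rw [hs, hargeq, Real.sqrt_sq (by linarith)]
        rw [hk, hsu]
        simp
  refine ⟨hρm0, hρm1, (main _ hρm0 hρm1).2.mpr rfl, main, ?_⟩
  intro qs Qs fs hqs hQs hfs hAeq
  subst hAeq
  have h1 : fs + qs ≠ 0 := by positivity
  field_simp
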